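/- (Super Poincaré inequality transfers from Lebesgue measure to the sticky measure.) Set a₀ = 1/(2+ωL) and b₀ = ω a₀. Suppose β : (0,∞) → [1,∞) is such that for all s > 0 and all f ∈ C¹([0,L]): ∫₀ᴸ f² dx ≤ s ∫₀ᴸ f′(x)² dx + β(s) (∫₀ᴸ |f| dx)². Then for all s > 0 and all f ∈ C¹([0,L]): ∫ f² dμ ≤ b₀ s ∫₀ᴸ f′(x)² dx + (a₀⁻¹ + b₀⁻¹) β(s) (∫ |f| dμ)². -/

import Mathlib

open MeasureTheory Set

/-- The invariant probability measure of sticky Brownian motion on `[0, L]` with parameter `ω`: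
`μ = (2 + ωL)⁻¹ (δ₀ + ω·λ_{[0,L]} + δ_L)`. -/
noncomputable def stickyMeasure (ω L : ℝ) : Measure ℝ :=
  (ENNReal.ofReal (2 + ω * L))⁻¹ •
    (Measure.dirac 0 + ENNReal.ofReal ω • volume.restrict (Icc 0 L) + Measure.dirac L)

lemma integrable_dirac' (g : ℝ → ℝ) (a : ℝ) : Integrable g (Measure.dirac a) := by
  refine (integrable_const (g a)).congr ?_
  rw [Filter.EventuallyEq, ae_dirac_eq]
  simp

lemma sticky_integral (ω L : ℝ) (hω : 0 < ω) (hL : 0 < L) (g : ℝ → ℝ)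
    (hg : ContinuousOn g (Icc 0 L)) :
    ∫ x, g x ∂(stickyMeasure ω L) =
      (2 + ω * L)⁻¹ * (g 0 + g L) + ((2 + ω * L)⁻¹ * ω) * ∫ x in (0:ℝ)..L, g x := by
  have hc : (0:ℝ) < 2 + ω * L := by nlinarith
  have hint : IntegrableOn g (Icc 0 L) volume := hg.integrableOn_Icc
  have hint2 : Integrable g (ENNReal.ofReal ω • volume.restrict (Icc 0 L)) :=
    hint.smul_measure ENNReal.ofReal_ne_top
  rw [stickyMeasure, integral_smul_measure, integral_add_measure
    ((integrable_dirac' g 0).add_measure hint2) (integrable_dirac' g L),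
    integral_add_measure (integrable_dirac' g 0) hint2, integral_dirac, integral_dirac,
    integral_smul_measure]
  have h1 : ∫ x in Icc (0:ℝ) L, g x = ∫ x in (0:ℝ)..L, g x := by
    rw [intervalIntegral.integral_of_le hL.le, integral_Icc_eq_integral_Ioc]
  rw [h1, ENNReal.toReal_inv, ENNReal.toReal_ofReal hc.le, ENNReal.toReal_ofReal hω.le]
  simp [smul_eq_mul]
  ring

/-- **Super Poincaré inequality transfers from Lebesgue measure to the sticky measure.**
With `a₀ = 1/(2+ωL)` and `b₀ = ω a₀`: if `β : (0,∞) → [1,∞)` satisfies, for all `s > 0` and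
all `f ∈ C¹([0,L])`, `∫₀ᴸ f² dx ≤ s ∫₀ᴸ (f')² dx + β(s) (∫₀ᴸ |f| dx)²`, then for all `s > 0`
and all `f ∈ C¹([0,L])`,
`∫ f² dμ ≤ b₀ s ∫₀ᴸ (f')² dx + (a₀⁻¹ + b₀⁻¹) β(s) (∫ |f| dμ)²`. -/
theorem stmt_8 (ω L : ℝ) (hω : 0 < ω) (hL : 0 < L)
    (β : ℝ → ℝ) (hβ : ∀ s : ℝ, 0 < s → 1 ≤ β s)
    (hsuper : ∀ s : ℝ, 0 < s → ∀ f f' : ℝ → ℝ,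
      (∀ x ∈ Icc (0:ℝ) L, HasDerivWithinAt f (f' x) (Icc (0:ℝ) L) x) →
      ContinuousOn f' (Icc (0:ℝ) L) →
      (∫ x in (0:ℝ)..L, (f x) ^ 2) ≤
        s * (∫ x in (0:ℝ)..L, (f' x) ^ 2) + β s * (∫ x in (0:ℝ)..L, |f x|) ^ 2) :
    ∀ s : ℝ, 0 < s → ∀ f f' : ℝ → ℝ,
      (∀ x ∈ Icc (0:ℝ) L, HasDerivWithinAt f (f' x) (Icc (0:ℝ) L) x) →
      ContinuousOn f' (Icc (0:ℝ) L) →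
      (∫ x, (f x) ^ 2 ∂(stickyMeasure ω L)) ≤
        (ω * (1 / (2 + ω * L))) * s * (∫ x in (0:ℝ)..L, (f' x) ^ 2) +
          ((1 / (2 + ω * L))⁻¹ + (ω * (1 / (2 + ω * L)))⁻¹) * β s *
            (∫ x, |f x| ∂(stickyMeasure ω L)) ^ 2 := by
  intro s hs f f' hf hf'
  have hc : (0:ℝ) < 2 + ω * L := by nlinarith
  have hfc : ContinuousOn f (Icc 0 L) := fun x hx => (hf x hx).continuousWithinAt
  have h2 := sticky_integral ω L hω hL (fun x => (f x) ^ 2) (hfc.pow 2)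
  have h1 := sticky_integral ω L hω hL (fun x => |f x|) hfc.abs
  rw [h1, h2]
  have hsup := hsuper s hs f f' hf hf'
  clear h1 h2 hsuper hf hf' hfc
  have hI1nn : (0:ℝ) ≤ ∫ x in (0:ℝ)..L, |f x| :=
    intervalIntegral.integral_nonneg hL.le (fun x _ => abs_nonneg _)
  set a : ℝ := (2 + ω * L)⁻¹ with ha_def
  have ha : 0 < a := inv_pos.mpr hc
  set b : ℝ := a * ω with hb_def
  have hb : 0 < b := mul_pos ha hω
  clear_value a b
  set I1 : ℝ := ∫ x in (0:ℝ)..L, |f x| with hI1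
  set I2 : ℝ := ∫ x in (0:ℝ)..L, (f x) ^ 2 with hI2
  set D : ℝ := ∫ x in (0:ℝ)..L, (f' x) ^ 2 with hD
  clear_value I1 I2 D
  have hβs := hβ s hs
  set A : ℝ := |f 0| + |f L| with hA
  have hAnn : 0 ≤ A := by positivity
  have hAsq : (f 0) ^ 2 + (f L) ^ 2 ≤ A ^ 2 := by
    rw [hA]
    nlinarith [sq_abs (f 0), sq_abs (f L), mul_nonneg (abs_nonneg (f 0)) (abs_nonneg (f L))]
  set M : ℝ := a * A + a * ω * I1 with hM
  clear_value A
  have hM1 : b * I1 ≤ M := by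
    rw [hM, hb_def]; nlinarith [mul_nonneg ha.le hAnn]
  have hM2 : a * A ≤ M := by
    rw [hM]; nlinarith [mul_nonneg (mul_nonneg ha.le hω.le) hI1nn]
  have hMnn : 0 ≤ M := le_trans (mul_nonneg ha.le hAnn) hM2
  clear_value M
  have key1 : a * ((f 0) ^ 2 + (f L) ^ 2) ≤ a⁻¹ * β s * M ^ 2 := by
    have e2 : a * A ^ 2 = a⁻¹ * (a * A) ^ 2 := by field_simp
    have e3 : (a * A) ^ 2 ≤ M ^ 2 := by
      apply sq_le_sq' _ hM2
      linarith [mul_nonneg ha.le hAnn]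
    calc a * ((f 0) ^ 2 + (f L) ^ 2) ≤ a * A ^ 2 := by nlinarith
      _ = a⁻¹ * (a * A) ^ 2 := e2
      _ ≤ a⁻¹ * M ^ 2 := mul_le_mul_of_nonneg_left e3 (inv_pos.mpr ha).le
      _ ≤ a⁻¹ * β s * M ^ 2 := by
          have h := mul_le_mul_of_nonneg_right hβs
            (mul_nonneg (inv_pos.mpr ha).le (sq_nonneg M))
          linarith [h]
  have key2 : b * (β s * I1 ^ 2) ≤ b⁻¹ * β s * M ^ 2 := by
    have e1 : (b * I1) ^ 2 ≤ M ^ 2 := by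
      apply sq_le_sq' _ hM1
      linarith [mul_nonneg hb.le hI1nn]
    have e2 : b * (β s * I1 ^ 2) = b⁻¹ * β s * (b * I1) ^ 2 := by field_simp
    rw [e2]
    exact mul_le_mul_of_nonneg_left e1
      (mul_nonneg (inv_pos.mpr hb).le (le_trans zero_le_one hβs))
  have hbsup : b * I2 ≤ b * (s * D) + b * (β s * I1 ^ 2) := by
    rw [← mul_add]; exact mul_le_mul_of_nonneg_left hsup hb.le
  have hωa : ω * a = b := by rw [hb_def]; ring
  have hMgoal : a * A + b * I1 = M := by rw [hM, hb_def]; try ring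
  rw [one_div, ← ha_def, hωa, hMgoal]
  linarith [key1, key2, hbsup]
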